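/- Let n be even, g = (a,b) and h = (c,d) in ℤ₂×ℤ₂, and 1 ≤ p < q ≤ n/2. Then the twisted string order parameter equals the twist phase times the product of the global symmetry and the string order parameter: T_{[p,q]}^{(g,h)} = (−1)^{ad−bc} · U(h) · S_{[p,q]}(g) as 2^n×2^n matrices (where (−1)^{ad−bc} = (−1)^{ad+bc}). -/

import Mathlib

open Matrix Complex
open scoped ComplexOrder

noncomputable section

/-- The state space of `n` qubits, as functions on classical bit strings. -/
abbrev QState (n : ℕ) := (Fin n → Fin 2) → ℂ

/-- Operators on `n` qubits: `2^n × 2^n` complex matrices. -/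
abbrev Op (n : ℕ) := Matrix (Fin n → Fin 2) (Fin n → Fin 2) ℂ

/-- The single-qubit Pauli `X` matrix. -/
def Xmat : Matrix (Fin 2) (Fin 2) ℂ := !![0, 1; 1, 0]

/-- The single-qubit Pauli `Z` matrix. -/
def Zmat : Matrix (Fin 2) (Fin 2) ℂ := !![1, 0; 0, -1]

/-- Map a 1-based cyclic site label `j ∈ {1,…,n}` (taken mod `n`) to an index in `Fin n`. -/
def site (n : ℕ) [NeZero n] (j : ℕ) : Fin n :=
  ⟨(j + (n - 1)) % n, Nat.mod_lt _ (Nat.pos_of_ne_zero (NeZero.ne n))⟩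

/-- The operator acting as the single-qubit matrix `M` on qubit `i` and as identity elsewhere. -/
def onSite (n : ℕ) (i : Fin n) (M : Matrix (Fin 2) (Fin 2) ℂ) : Op n :=
  Matrix.of fun s t => (if ∀ k, k ≠ i → s k = t k then 1 else 0) * M (s i) (t i)

/-- Pauli `X` on (1-based, cyclic) site `j`. -/
def PX (n : ℕ) [NeZero n] (j : ℕ) : Op n := onSite n (site n j) Xmat

/-- Pauli `Z` on (1-based, cyclic) site `j`. -/
def PZ (n : ℕ) [NeZero n] (j : ℕ) : Op n := onSite n (site n j) Zmat

/-- The cyclic cluster stabilizer `K_j = Z_{j-1} X_j Z_{j+1}` (for `1 ≤ j ≤ n`). -/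
def Kstab (n : ℕ) [NeZero n] (j : ℕ) : Op n := PZ n (j - 1) * PX n j * PZ n (j + 1)

/-- The symmetry group `ℤ₂ × ℤ₂`. -/
abbrev G2 := ZMod 2 × ZMod 2

/-- The nontrivial element `x = (0,1)` of `ℤ₂ × ℤ₂`. -/
def gx : G2 := (0, 1)

/-- The nontrivial element `y = (1,0)` of `ℤ₂ × ℤ₂`. -/
def gy : G2 := (1, 0)

/-- The nontrivial element `z = (1,1)` of `ℤ₂ × ℤ₂`. -/
def gz : G2 := (1, 1)

/-- The global symmetry representation `U((a,b)) = ∏_{j odd} X_j^a ∏_{j even} X_j^b`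
on `n` qubits (`n` even), written as a product over the `n/2` two-site blocks. -/
def Usym (n : ℕ) [NeZero n] (g : G2) : Op n :=
  ((List.range (n / 2)).map
    (fun p => PX n (2 * p + 1) ^ g.1.val * PX n (2 * p + 2) ^ g.2.val)).prod

/-- Left boundary operator `V^L_p((a,b))`: `Z^b` on qubit `2p-1` and `X^b Z^a` on qubit `2p`. -/
def VL (n : ℕ) [NeZero n] (p : ℕ) (g : G2) : Op n :=
  PZ n (2 * p - 1) ^ g.2.val * (PX n (2 * p) ^ g.2.val * PZ n (2 * p) ^ g.1.val)

/-- Right boundary operator `V^R_p((a,b))`: `Z^b X^a` on qubit `2p-1` and `Z^a` on qubit `2p`. -/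
def VR (n : ℕ) [NeZero n] (p : ℕ) (g : G2) : Op n :=
  (PZ n (2 * p - 1) ^ g.2.val * PX n (2 * p - 1) ^ g.1.val) * PZ n (2 * p) ^ g.1.val

/-- Truncated symmetry `U_{[p,q]}((a,b)) = ∏_{r=p+1}^{q-1} X_{2r-1}^a X_{2r}^b`. -/
def Ustr (n : ℕ) [NeZero n] (p q : ℕ) (g : G2) : Op n :=
  ((List.range (q - (p + 1))).map
    (fun r => PX n (2 * (p + 1 + r) - 1) ^ g.1.val * PX n (2 * (p + 1 + r)) ^ g.2.val)).prod

/-- The string order parameter `S_{[p,q]}(g) = V^L_p(g) · U_{[p,q]}(g) · V^R_q(g)`. -/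
def SOPm (n : ℕ) [NeZero n] (p q : ℕ) (g : G2) : Op n :=
  VL n p g * Ustr n p q g * VR n q g

/-- The twisted string order parameter
`T_{[p,q]}^{(g,h)} = V^R_q(g) · U(h) · V^L_p(g) · U_{[p,q]}(g)`. -/
def TSOP (n : ℕ) [NeZero n] (p q : ℕ) (g h : G2) : Op n :=
  VR n q g * Usym n h * VL n p g * Ustr n p q g

/-- The triangle-game winning operator
`O_{g,h} = (1/32)(12·1 + 12 U(g) + U(h) + U(gh) − 3T − 3U(g)T)` with `T = T_{[1,n/6+1]}^{(g,h)}`. -/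
def Owin (n : ℕ) [NeZero n] (g h : G2) : Op n :=
  (32 : ℂ)⁻¹ • (12 • (1 : Op n) + 12 • Usym n g + Usym n h + Usym n (g + h)
    - 3 • TSOP n 1 (n / 6 + 1) g h - 3 • (Usym n g * TSOP n 1 (n / 6 + 1) g h))

/-- The `n`-fold tensor product `|+⟩^{⊗n}`, with all amplitudes `(1/√2)^n`. -/
def plusState (n : ℕ) : QState n := fun _ => (((Real.sqrt 2)⁻¹ : ℝ) : ℂ) ^ n

/-- The controlled-`Z` gate between (1-based, cyclic) sites `j` and `k`. -/
def CZm (n : ℕ) [NeZero n] (j k : ℕ) : Op n :=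
  Matrix.of fun s t =>
    if s = t then (if s (site n j) = 1 ∧ s (site n k) = 1 then -1 else 1) else 0

/-- The `n`-qubit cyclic cluster state `|C_n⟩ = (∏_{j=1}^n CZ_{j,j+1}) |+⟩^{⊗n}`. -/
def cluster (n : ℕ) [NeZero n] : QState n :=
  (((List.range n).map (fun j => CZm n (j + 1) (j + 2))).prod).mulVec (plusState n)


/-!
`V^R_q(g)` acts only on block `q`, so it commutes with `V^L_p(g)`, with `U_{[p,q]}(g)`
(supported on blocks `p+1, …, q-1`) and with every block of `U(h)` except the `q`-th.
On block `q`, since `Z X = -X Z`, moving `Z^b X^a ⊗ Z^a` past `X^c ⊗ X^d` costs `(-1)^{bc}`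
on qubit `2q-1` and `(-1)^{ad}` on qubit `2q`. So carrying `V^R_q(g)` from the front of `T`
to its back produces exactly the twist phase and leaves `U(h) S_{[p,q]}(g)`.
-/

section OnSite

variable {n : ℕ}

theorem onSite_mul_apply (i : Fin n) (M : Matrix (Fin 2) (Fin 2) ℂ) (B : Op n)
    (s t : Fin n → Fin 2) :
    (onSite n i M * B) s t = ∑ v, M (s i) v * B (Function.update s i v) t := by
  rw [Matrix.mul_apply]
  symm
  refine Finset.sum_of_injOn (Function.update s i) ?_ (fun _ _ => Finset.mem_univ _) ?_ ?_
  · intro a _ b _ hab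
    simpa using congrFun hab i
  · intro u _ hu
    have hs : ¬ ∀ k, k ≠ i → s k = u k := fun hs =>
      hu ⟨u i, Finset.mem_coe.mpr (Finset.mem_univ _),
        (Function.eq_update_iff.mpr ⟨rfl, fun k hk => (hs k hk).symm⟩).symm⟩
    simp [onSite, hs]
  · intro v _
    simp +contextual [onSite, Function.update_of_ne]

theorem onSite_one (i : Fin n) : onSite n i 1 = 1 := by
  ext s t
  simp only [onSite, Matrix.of_apply, Matrix.one_apply, mul_ite, mul_one, mul_zero, ← ite_and]
  congr 1
  exact propext ⟨fun h => funext fun k => if hk : k = i then hk ▸ h.1 else h.2 k hk,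
    fun h => ⟨congrFun h i, fun k _ => congrFun h k⟩⟩

theorem onSite_mul (i : Fin n) (M N : Matrix (Fin 2) (Fin 2) ℂ) :
    onSite n i M * onSite n i N = onSite n i (M * N) := by
  ext s t
  have hcond (v : Fin 2) :
      (∀ k, k ≠ i → Function.update s i v k = t k) ↔ ∀ k, k ≠ i → s k = t k :=
    forall₂_congr fun k hk => by rw [Function.update_of_ne hk]
  rw [onSite_mul_apply]
  simp only [onSite, Matrix.of_apply, hcond, Function.update_self, Matrix.mul_apply,
    Finset.mul_sum]
  exact Finset.sum_congr rfl fun v _ => by ring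

theorem onSite_pow (i : Fin n) (M : Matrix (Fin 2) (Fin 2) ℂ) (k : ℕ) :
    onSite n i M ^ k = onSite n i (M ^ k) := by
  induction k with
  | zero => simp [onSite_one]
  | succ k ih => rw [pow_succ, pow_succ, ih, onSite_mul]

theorem onSite_smul (i : Fin n) (c : ℂ) (M : Matrix (Fin 2) (Fin 2) ℂ) :
    onSite n i (c • M) = c • onSite n i M := by
  ext s t
  simp only [onSite, Matrix.of_apply, Matrix.smul_apply, smul_eq_mul]
  ring

theorem onSite_mul_onSite_apply_of_ne {i j : Fin n} (hij : i ≠ j)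
    (M N : Matrix (Fin 2) (Fin 2) ℂ) (s t : Fin n → Fin 2) :
    (onSite n i M * onSite n j N) s t =
      (if ∀ k, k ≠ i → k ≠ j → s k = t k then 1 else 0) * M (s i) (t i) *
        N (s j) (t j) := by
  have hcond (v : Fin 2) : (∀ k, k ≠ j → Function.update s i v k = t k) ↔
      v = t i ∧ ∀ k, k ≠ i → k ≠ j → s k = t k := by
    constructor
    · intro h
      refine ⟨by simpa using h i hij, fun k hki hkj => ?_⟩
      simpa [Function.update_of_ne hki] using h k hkj
    · rintro ⟨rfl, h⟩ k hkj
      by_cases hki : k = i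
      · subst hki; simp
      · simp [Function.update_of_ne hki, h k hki hkj]
  rw [onSite_mul_apply]
  simp [onSite, hcond, ite_and, Function.update_of_ne hij.symm, Finset.sum_ite_eq']

theorem commute_onSite_of_ne {i j : Fin n} (hij : i ≠ j) (M N : Matrix (Fin 2) (Fin 2) ℂ) :
    Commute (onSite n i M) (onSite n j N) := by
  refine Matrix.ext fun s t => ?_
  rw [onSite_mul_onSite_apply_of_ne hij, onSite_mul_onSite_apply_of_ne hij.symm]
  simp only [Ne, forall_comm (α := ¬ _ = i)]
  ring

end OnSite

theorem Zmat_mul_Xmat : Zmat * Xmat = -(Xmat * Zmat) := by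
  ext i j
  fin_cases i <;> fin_cases j <;> simp [Xmat, Zmat, Matrix.mul_apply, Fin.sum_univ_two]

theorem Zmat_mul_Xmat_pow (k : ℕ) : Zmat * Xmat ^ k = ((-1 : ℂ) ^ k) • (Xmat ^ k * Zmat) := by
  induction k with
  | zero => simp
  | succ k ih =>
    rw [pow_succ, ← mul_assoc, ih, smul_mul_assoc, mul_assoc, Zmat_mul_Xmat, mul_neg,
      smul_neg, ← neg_smul, ← mul_assoc, pow_succ, mul_neg_one]

theorem Zmat_pow_mul_Xmat_pow (m k : ℕ) :
    Zmat ^ m * Xmat ^ k = ((-1 : ℂ) ^ (m * k)) • (Xmat ^ k * Zmat ^ m) := by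
  induction m with
  | zero => simp
  | succ m ih =>
    rw [pow_succ, mul_assoc, Zmat_mul_Xmat_pow, mul_smul_comm, ← mul_assoc, ih, smul_mul_assoc,
      smul_smul, ← pow_add, mul_assoc, Nat.succ_mul, add_comm (m * k)]

section Sites

variable {n : ℕ} [NeZero n]

theorem site_val {j : ℕ} (hj : 1 ≤ j) (hjn : j ≤ n) : (site n j).val = j - 1 := by
  have hn : 1 ≤ n := Nat.one_le_iff_ne_zero.mpr (NeZero.ne n)
  have h : j + (n - 1) = (j - 1) + 1 * n := by omega
  simp only [site, h, Nat.add_mul_mod_self_right]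
  exact Nat.mod_eq_of_lt (by omega)

theorem site_ne {j k : ℕ} (hj : 1 ≤ j) (hjn : j ≤ n) (hk : 1 ≤ k) (hkn : k ≤ n)
    (hjk : j ≠ k) :
    site n j ≠ site n k := fun h => by
  have := congrArg Fin.val h
  rw [site_val hj hjn, site_val hk hkn] at this
  omega

theorem PX_pow (j k : ℕ) : PX n j ^ k = onSite n (site n j) (Xmat ^ k) := onSite_pow _ _ _

theorem PZ_pow (j k : ℕ) : PZ n j ^ k = onSite n (site n j) (Zmat ^ k) := onSite_pow _ _ _

end Sites

theorem mul_list_prod_map_eq_smul {ι S R : Type*} [CommMonoid S] [Monoid R] [MulAction S R]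
    [IsScalarTower S R R] [SMulCommClass S R R] (a : R) (f : ι → R) (c : ι → S) (l : List ι)
    (h : ∀ i ∈ l, a * f i = c i • (f i * a)) :
    a * (l.map f).prod = (l.map c).prod • ((l.map f).prod * a) := by
  induction l with
  | nil => simp
  | cons i l ih =>
    simp only [List.map_cons, List.prod_cons, List.forall_mem_cons] at h ⊢
    rw [← mul_assoc, h.1, smul_mul_assoc, mul_assoc, ih h.2, mul_smul_comm, smul_smul,
      ← mul_assoc]

section BoundaryOperators

variable {n : ℕ} [NeZero n]

theorem commute_VR_onSite {q j : ℕ} (hq : 1 ≤ q) (hqn : 2 * q ≤ n) (hj : 1 ≤ j)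
    (hjn : j ≤ n) (hj₁ : j ≠ 2 * q - 1) (hj₂ : j ≠ 2 * q) (g : G2)
    (M : Matrix (Fin 2) (Fin 2) ℂ) :
    Commute (VR n q g) (onSite n (site n j) M) := by
  have h₁ : site n (2 * q - 1) ≠ site n j := site_ne (by omega) (by omega) hj hjn hj₁.symm
  have h₂ : site n (2 * q) ≠ site n j := site_ne (by omega) hqn hj hjn hj₂.symm
  rw [VR, PZ_pow, PX_pow, PZ_pow]
  exact ((commute_onSite_of_ne h₁ _ _).mul_left (commute_onSite_of_ne h₁ _ _)).mul_left
    (commute_onSite_of_ne h₂ _ _)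

theorem commute_VR_PX_pow_mul_PX_pow {q m : ℕ} (hq : 1 ≤ q) (hqn : 2 * q ≤ n) (hm : 1 ≤ m)
    (hmn : 2 * m ≤ n) (hmq : m ≠ q) (g : G2) (c d : ℕ) :
    Commute (VR n q g) (PX n (2 * m - 1) ^ c * PX n (2 * m) ^ d) := by
  rw [PX_pow, PX_pow]
  exact (commute_VR_onSite hq hqn (by omega) (by omega) (by omega) (by omega) g _).mul_right
    (commute_VR_onSite hq hqn (by omega) hmn (by omega) (by omega) g _)

theorem VR_mul_PX_pow_mul_PX_pow {q : ℕ} (hq : 1 ≤ q) (hqn : 2 * q ≤ n) (g : G2) (c d : ℕ) :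
    VR n q g * (PX n (2 * q - 1) ^ c * PX n (2 * q) ^ d)
      = ((-1 : ℂ) ^ (g.1.val * d + g.2.val * c)) •
        ((PX n (2 * q - 1) ^ c * PX n (2 * q) ^ d) * VR n q g) := by
  have hij : site n (2 * q - 1) ≠ site n (2 * q) :=
    site_ne (by omega) (by omega) (by omega) hqn (by omega)
  have two_site (M N M' N' : Matrix (Fin 2) (Fin 2) ℂ) :
      (onSite n (site n (2 * q - 1)) M * onSite n (site n (2 * q)) N) *
          (onSite n (site n (2 * q - 1)) M' * onSite n (site n (2 * q)) N') =
        onSite n (site n (2 * q - 1)) (M * M') * onSite n (site n (2 * q)) (N * N') := by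
    rw [mul_assoc, ← mul_assoc (onSite n _ N), (commute_onSite_of_ne hij.symm _ _).eq, mul_assoc,
      onSite_mul, ← mul_assoc, onSite_mul]
  have e₁ : Zmat ^ g.2.val * Xmat ^ g.1.val * Xmat ^ c
      = ((-1 : ℂ) ^ (g.2.val * c)) • (Xmat ^ c * (Zmat ^ g.2.val * Xmat ^ g.1.val)) := by
    rw [mul_assoc, ← pow_add, add_comm, pow_add, ← mul_assoc, Zmat_pow_mul_Xmat_pow,
      smul_mul_assoc, mul_assoc]
  rw [VR, PZ_pow, PX_pow, PZ_pow, PX_pow, PX_pow, onSite_mul, two_site, two_site, e₁,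
    Zmat_pow_mul_Xmat_pow g.1.val d, onSite_smul, onSite_smul, smul_mul_smul_comm, ← pow_add,
    add_comm]

theorem VR_mul_Usym {q : ℕ} (hq : 1 ≤ q) (hqn : q ≤ n / 2) (g h : G2) :
    VR n q g * Usym n h
      = ((-1 : ℂ) ^ (g.1.val * h.2.val + g.2.val * h.1.val)) • (Usym n h * VR n q g) := by
  set φ : ℂ := (-1 : ℂ) ^ (g.1.val * h.2.val + g.2.val * h.1.val)
  have hblock : ∀ p ∈ List.range (n / 2),
      VR n q g * (PX n (2 * p + 1) ^ h.1.val * PX n (2 * p + 2) ^ h.2.val)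
        = (if p = q - 1 then φ else 1) •
          ((PX n (2 * p + 1) ^ h.1.val * PX n (2 * p + 2) ^ h.2.val) * VR n q g) := by
    intro p hmem
    have hp := List.mem_range.mp hmem
    rw [show 2 * p + 1 = 2 * (p + 1) - 1 by omega, show 2 * p + 2 = 2 * (p + 1) by omega]
    split_ifs with hpq
    · rw [show p + 1 = q by omega]
      exact VR_mul_PX_pow_mul_PX_pow hq (by omega) g _ _
    · rw [one_smul]
      exact commute_VR_PX_pow_mul_PX_pow hq (by omega) (by omega) (by omega) (by omega) g _ _
  have hφ : ((List.range (n / 2)).map fun p => if p = q - 1 then φ else 1).prod = φ := by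
    rw [← List.prod_toFinset _ List.nodup_range, List.toFinset_range, Finset.prod_ite_eq',
      if_pos (Finset.mem_range.mpr (by omega))]
  rw [Usym, mul_list_prod_map_eq_smul _ _ _ _ hblock, hφ]

theorem commute_VR_VL {p q : ℕ} (hp : 1 ≤ p) (hpq : p < q) (hqn : 2 * q ≤ n) (g : G2) :
    Commute (VR n q g) (VL n p g) := by
  have hc (j : ℕ) (hj : 1 ≤ j) (hjp : j ≤ 2 * p) (M : Matrix (Fin 2) (Fin 2) ℂ) :
      Commute (VR n q g) (onSite n (site n j) M) :=
    commute_VR_onSite (by omega) hqn hj (by omega) (by omega) (by omega) g M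
  rw [VL, PZ_pow, PX_pow, PZ_pow]
  exact (hc _ (by omega) (by omega) _).mul_right
    ((hc _ (by omega) le_rfl _).mul_right (hc _ (by omega) le_rfl _))

theorem commute_VR_Ustr {p q : ℕ} (hqn : 2 * q ≤ n) (g : G2) :
    Commute (VR n q g) (Ustr n p q g) := by
  refine Commute.list_prod_right _ _ fun x hx => ?_
  obtain ⟨r, hr, rfl⟩ := List.mem_map.mp hx
  have hr := List.mem_range.mp hr
  exact commute_VR_PX_pow_mul_PX_pow (by omega) hqn (by omega) (by omega) (by omega) g _ _

end BoundaryOperators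

theorem TSOP_eq_twist_phase_mul_general (n : ℕ) [NeZero n] (p q : ℕ)
    (hp : 1 ≤ p) (hpq : p < q) (hq : q ≤ n / 2) (g h : G2) :
    TSOP n p q g h
      = ((-1 : ℂ) ^ (g.1.val * h.2.val + g.2.val * h.1.val)) •
          (Usym n h * SOPm n p q g) := by
  have hqn : 2 * q ≤ n := by omega
  have hVR : Commute (VR n q g) (VL n p g * Ustr n p q g) :=
    (commute_VR_VL hp hpq hqn g).mul_right (commute_VR_Ustr hqn g)
  calc TSOP n p q g h = (VR n q g * Usym n h) * (VL n p g * Ustr n p q g) := by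
        simp only [TSOP, mul_assoc]
    _ = _ • (Usym n h * (VR n q g * (VL n p g * Ustr n p q g))) := by
        rw [VR_mul_Usym (by omega) hq g h, smul_mul_assoc, mul_assoc]
    _ = _ := by rw [hVR.eq, SOPm]

/-- The twisted string order parameter equals the twist phase times the product of the global
symmetry and the string order parameter:
`T_{[p,q]}^{(g,h)} = (−1)^{ad−bc} U(h) S_{[p,q]}(g)` (with `(−1)^{ad−bc} = (−1)^{ad+bc}`). -/
theorem TSOP_eq_twist_phase_mul (n : ℕ) [NeZero n] (hn : Even n) (p q : ℕ)
    (hp : 1 ≤ p) (hpq : p < q) (hq : q ≤ n / 2) (g h : G2) :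
    TSOP n p q g h
      = ((-1 : ℂ) ^ (g.1.val * h.2.val + g.2.val * h.1.val)) •
          (Usym n h * SOPm n p q g) :=
  TSOP_eq_twist_phase_mul_general n p q hp hpq hq g h
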